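/- Let Λ ⊆ E be an f-invariant set admitting a hyperbolic splitting (S, U, C, λ). Then for every x ∈ Λ the unstable subspace is characterized dynamically: U(x) = {v ∈ E : sup_{n ≥ 0} ‖Df⁻ⁿ(x)v‖ < ∞}. -/

import Mathlib

open Function Set Filter Topology

/-- The derivative of the `n`-th iterate of `f` (inverse iterates use the inverse map `g`)
at the point `x`, for `n : ℤ`. -/
noncomputable def Dfn {E : Type*} [NormedAddCommGroup E] [NormedSpace ℝ E]
    (f g : E → E) (n : ℤ) (x : E) : E →L[ℝ] E :=
  if 0 ≤ n then fderiv ℝ (f^[n.toNat]) x else fderiv ℝ (g^[(-n).toNat]) x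

/-- `f` is a C¹ diffeomorphism with inverse `g`. -/
def IsC1Diffeo {E : Type*} [NormedAddCommGroup E] [NormedSpace ℝ E] (f g : E → E) : Prop :=
  ContDiff ℝ 1 f ∧ ContDiff ℝ 1 g ∧ Function.LeftInverse g f ∧ Function.RightInverse g f

/-- A hyperbolic splitting `(S, U, C, lam)` for `f` (with inverse `g`) over an invariant
set `Λ`. -/
structure HypSplit {E : Type*} [NormedAddCommGroup E] [NormedSpace ℝ E]
    (f g : E → E) (Λ : Set E) (S U : E → Submodule ℝ E) (C lam : ℝ) : Prop where
  one_le_C : 1 ≤ C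
  lam_pos : 0 < lam
  lam_lt_one : lam < 1
  isCompl : ∀ x ∈ Λ, IsCompl (S x) (U x)
  mapS : ∀ x ∈ Λ, (S x).map (fderiv ℝ f x).toLinearMap = S (f x)
  mapU : ∀ x ∈ Λ, (U x).map (fderiv ℝ f x).toLinearMap = U (f x)
  stable : ∀ x ∈ Λ, ∀ v ∈ S x, ∀ n : ℕ, ‖Dfn f g (n : ℤ) x v‖ ≤ C * lam ^ n * ‖v‖
  unstable : ∀ x ∈ Λ, ∀ v ∈ U x, ∀ n : ℕ, ‖Dfn f g (-(n : ℤ)) x v‖ ≤ C * lam ^ n * ‖v‖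

/-- `f` (with inverse `g`) is quasi-Anosov on `Λ`: for every `x ∈ Λ` and every nonzero
`v`, the set `{‖Dfⁿ(x)v‖ : n ∈ ℤ}` is unbounded. -/
def QuasiAnosovOn {E : Type*} [NormedAddCommGroup E] [NormedSpace ℝ E]
    (f g : E → E) (Λ : Set E) : Prop :=
  ∀ x ∈ Λ, ∀ v : E, v ≠ 0 → ¬ BddAbove (Set.range fun n : ℤ => ‖Dfn f g n x v‖)

section helpers
variable {E : Type*} [NormedAddCommGroup E] [NormedSpace ℝ E]

lemma Dfn_natCast (f g : E → E) (n : ℕ) (x : E) :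
    Dfn f g (n : ℤ) x = fderiv ℝ (f^[n]) x := by
  simp [Dfn]

lemma Dfn_neg_natCast (f g : E → E) (n : ℕ) (x : E) :
    Dfn f g (-(n : ℤ)) x = fderiv ℝ (g^[n]) x := by
  rcases Nat.eq_zero_or_pos n with h | h
  · subst h; simp [Dfn]
  · rw [Dfn, if_neg (by omega)]
    norm_num

lemma fderiv_comp_eq_id (φ ψ : E → E) (hφ : Differentiable ℝ φ) (hψ : Differentiable ℝ ψ)
    (h : ∀ y, φ (ψ y) = y) (y : E) :
    (fderiv ℝ φ (ψ y)).comp (fderiv ℝ ψ y) = ContinuousLinearMap.id ℝ E := by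
  have h2 : φ ∘ ψ = id := funext h
  rw [← fderiv_comp y (hφ _) (hψ _), h2, fderiv_id]

lemma fderiv_iterate_succ (φ : E → E) (hφ : Differentiable ℝ φ) (n : ℕ) (x : E) :
    fderiv ℝ (φ^[n + 1]) x = (fderiv ℝ φ (φ^[n] x)).comp (fderiv ℝ (φ^[n]) x) := by
  rw [Function.iterate_succ', fderiv_comp x (hφ _) ((hφ.iterate n) x)]

end helpers

/-- dynamical characterization of the unstable subspace:
`U(x) = {v : sup_{n ≥ 0} ‖Df⁻ⁿ(x)v‖ < ∞}`. -/
theorem unstable_subspace_dynamical_characterization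
    {E : Type*} [NormedAddCommGroup E] [NormedSpace ℝ E] [FiniteDimensional ℝ E]
    (f g : E → E) (hf : IsC1Diffeo f g)
    (Λ : Set E) (hΛ : f '' Λ = Λ)
    (S U : E → Submodule ℝ E) (C lam : ℝ)
    (hsplit : HypSplit f g Λ S U C lam) :
    ∀ x ∈ Λ,
      (U x : Set E) =
        {v : E | BddAbove (Set.range fun n : ℕ => ‖Dfn f g (-(n : ℤ)) x v‖)} := by
  obtain ⟨hCf, hCg, hgf, hfg⟩ := hf
  have hDf : Differentiable ℝ f := hCf.differentiable one_ne_zero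
  have hDg : Differentiable ℝ g := hCg.differentiable one_ne_zero
  have hCpos : (0:ℝ) < C := lt_of_lt_of_le one_pos hsplit.one_le_C
  have hlam := hsplit.lam_pos
  -- invariance
  have hmemf : ∀ x ∈ Λ, f x ∈ Λ := fun x hx => hΛ ▸ mem_image_of_mem f hx
  have hmemg : ∀ x ∈ Λ, g x ∈ Λ := by
    intro x hx
    rw [← hΛ] at hx
    obtain ⟨y, hy, rfl⟩ := hx
    rwa [hgf y]
  have hmemfIter : ∀ (n : ℕ), ∀ x ∈ Λ, f^[n] x ∈ Λ := by
    intro n; induction n with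
    | zero => simpa using fun x hx => hx
    | succ k ih => intro x hx; rw [Function.iterate_succ']; exact hmemf _ (ih x hx)
  have hmemgIter : ∀ (n : ℕ), ∀ x ∈ Λ, g^[n] x ∈ Λ := by
    intro n; induction n with
    | zero => simpa using fun x hx => hx
    | succ k ih => intro x hx; rw [Function.iterate_succ']; exact hmemg _ (ih x hx)
  -- iterated mapS
  have hmapS : ∀ (n : ℕ), ∀ x ∈ Λ,
      (S x).map (fderiv ℝ (f^[n]) x).toLinearMap = S (f^[n] x) := by
    intro n; induction n with
    | zero =>
      intro x hx
      simp [fderiv_id]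
    | succ k ih =>
      intro x hx
      rw [fderiv_iterate_succ f hDf k x, Function.iterate_succ_apply']
      rw [ContinuousLinearMap.toLinearMap_comp, Submodule.map_comp, ih x hx,
        hsplit.mapS _ (hmemfIter k x hx)]
  intro x hx
  ext v
  simp only [SetLike.mem_coe, mem_setOf_eq]
  constructor
  · intro hv
    refine ⟨C * ‖v‖, ?_⟩
    rintro r ⟨n, rfl⟩
    show ‖Dfn f g (-(n : ℤ)) x v‖ ≤ C * ‖v‖
    have := hsplit.unstable x hx v hv n
    have hle : lam ^ n ≤ 1 := pow_le_one₀ hlam.le hsplit.lam_lt_one.le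
    have h2 : C * lam ^ n * ‖v‖ ≤ C * ‖v‖ :=
      mul_le_mul_of_nonneg_right (mul_le_of_le_one_right hCpos.le hle) (norm_nonneg v)
    linarith
  · rintro ⟨M, hM⟩
    have hM' : ∀ n : ℕ, ‖fderiv ℝ (g^[n]) x v‖ ≤ M := by
      intro n
      have := hM (mem_range_self (f := fun n : ℕ => ‖Dfn f g (-(n : ℤ)) x v‖) n)
      rwa [Dfn_neg_natCast] at this
    have hM0 : 0 ≤ M := le_trans (norm_nonneg _) (hM' 0)
    obtain ⟨s, u, hs, hu, rfl⟩ :=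
      Submodule.codisjoint_iff_exists_add_eq.mp (hsplit.isCompl x hx).codisjoint v
    suffices hs0 : s = 0 by simpa [hs0] using hu
    by_contra hs0
    have hsnorm : 0 < ‖s‖ := norm_pos_iff.mpr hs0
    -- key estimate: ‖s‖ ≤ C * lam^n * (M + C * ‖u‖) for all n
    have key : ∀ n : ℕ, ‖s‖ ≤ C * lam ^ n * (M + C * ‖u‖) := by
      intro n
      set y := g^[n] x with hy
      have hyΛ : y ∈ Λ := hmemgIter n x hx
      have hfny : f^[n] y = x := hfg.iterate n x
      -- w := Df^{-n}(x) s lies in S y and Df^n(y) w = s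
      have hmap : (S y).map (fderiv ℝ (f^[n]) y).toLinearMap = S x := by
        rw [hmapS n y hyΛ, hfny]
      have hsx : s ∈ (S y).map (fderiv ℝ (f^[n]) y).toLinearMap := hmap ▸ hs
      obtain ⟨w, hw, hws⟩ := hsx
      have hid : (fderiv ℝ (g^[n]) x).comp (fderiv ℝ (f^[n]) y) = ContinuousLinearMap.id ℝ E := by
        have := fderiv_comp_eq_id (g^[n]) (f^[n]) (hDg.iterate n) (hDf.iterate n)
          (fun z => hgf.iterate n z) y
        rwa [hfny] at this
      have hwg : fderiv ℝ (g^[n]) x s = w := by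
        have := congrArg (fun (T : E →L[ℝ] E) => T w) hid
        simp only [ContinuousLinearMap.comp_apply, ContinuousLinearMap.id_apply] at this
        rw [← hws]
        exact this
      -- stable estimate at y
      have hws' : (fderiv ℝ (f^[n]) y) w = s := hws
      have hst := hsplit.stable y hyΛ w hw n
      rw [Dfn_natCast, hws'] at hst
      -- bound on ‖w‖
      have hub : ‖w‖ ≤ M + C * ‖u‖ := by
        have h1 : ‖fderiv ℝ (g^[n]) x (s + u)‖ ≤ M := hM' n
        have h2 : ‖fderiv ℝ (g^[n]) x u‖ ≤ C * ‖u‖ := by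
          have := hsplit.unstable x hx u hu n
          rw [Dfn_neg_natCast] at this
          have hle : lam ^ n ≤ 1 := pow_le_one₀ hlam.le hsplit.lam_lt_one.le
          have h2 : C * lam ^ n * ‖u‖ ≤ C * ‖u‖ :=
            mul_le_mul_of_nonneg_right (mul_le_of_le_one_right hCpos.le hle) (norm_nonneg u)
          linarith
        have h3 : ‖w‖ ≤ ‖fderiv ℝ (g^[n]) x (s + u)‖ + ‖fderiv ℝ (g^[n]) x u‖ := by
          rw [← hwg]
          have : fderiv ℝ (g^[n]) x s =
              fderiv ℝ (g^[n]) x (s + u) - fderiv ℝ (g^[n]) x u := by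
            rw [map_add]; abel
          rw [this]
          exact norm_sub_le _ _
        linarith
      calc ‖s‖ ≤ C * lam ^ n * ‖w‖ := hst
        _ ≤ C * lam ^ n * (M + C * ‖u‖) := by
            apply mul_le_mul_of_nonneg_left hub
            positivity
    -- get a contradiction using lam^n → 0
    set B := C * (M + C * ‖u‖) + 1 with hB
    have hBpos : 0 < B := by positivity
    obtain ⟨n, hn⟩ := exists_pow_lt_of_lt_one (div_pos hsnorm hBpos) hsplit.lam_lt_one
    have hkey := key n
    have hpow : 0 < lam ^ n := pow_pos hlam n
    have : ‖s‖ < ‖s‖ := by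
      calc ‖s‖ ≤ C * lam ^ n * (M + C * ‖u‖) := hkey
        _ ≤ lam ^ n * B := by nlinarith
        _ < (‖s‖ / B) * B := by exact mul_lt_mul_of_pos_right hn hBpos
        _ = ‖s‖ := div_mul_cancel₀ _ (ne_of_gt hBpos)
    exact lt_irrefl _ this
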